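/- If W satisfies the minimal constraints, W·ln W is integrable, all powers W^k for k ≥ 1 are integrable, and the purity of W satisfies 0 < μ ≤ 2/e, then S[W] ≥ 1 + ln π. -/
import Mathlib


open Real MeasureTheory

/-- If `W` satisfies the minimal constraints, `W·ln W` is integrable, all powers `W^k` for
`k ≥ 1` are integrable, and the purity `μ = 2π ∫ W²` satisfies `0 < μ ≤ 2/e`, then
`S[W] ≥ 1 + ln π`. -/
theorem wigner_conjecture_of_purity_le_two_div_e (W : ℝ × ℝ → ℝ) (hmeas : Measurable W)
    (hpos : ∀ z, 0 ≤ W z)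
    (hnorm : ∫ z, W z = 1)
    (hbound : ∀ z, Real.pi * W z ≤ 1)
    (hlog : Integrable (fun z => W z * Real.log (W z)))
    (hpow : ∀ k : ℕ, 1 ≤ k → Integrable (fun z => (W z) ^ k))
    (hmu0 : 0 < 2 * Real.pi * ∫ z, (W z) ^ 2)
    (hmu : 2 * Real.pi * (∫ z, (W z) ^ 2) ≤ 2 / Real.exp 1) :
    (-∫ z, W z * Real.log (W z)) ≥ 1 + Real.log Real.pi := by
  set c : ℝ := ∫ z, (W z) ^ 2 with hc
  have hc0 : 0 < c := by
    have h2pi : (0:ℝ) < 2 * Real.pi := by positivity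
    nlinarith [hmu0]
  -- pointwise bound : W z * log (W z) ≤ (W z)^2 / c - W z + W z * log c
  have hpt : ∀ z, W z * Real.log (W z) ≤ (W z) ^ 2 / c - W z + W z * Real.log c := by
    intro z
    rcases eq_or_lt_of_le (hpos z) with h0 | h0
    · simp [← h0]
    · have hy : 0 < W z / c := by positivity
      have := Real.log_le_sub_one_of_pos hy
      have hlogdiv : Real.log (W z / c) = Real.log (W z) - Real.log c :=
        Real.log_div (ne_of_gt h0) (ne_of_gt hc0)
      rw [hlogdiv] at this
      have hWle : Real.log (W z) ≤ W z / c - 1 + Real.log c := by linarith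
      have := mul_le_mul_of_nonneg_left hWle (hpos z)
      calc W z * Real.log (W z) ≤ W z * (W z / c - 1 + Real.log c) := this
        _ = (W z) ^ 2 / c - W z + W z * Real.log c := by ring
  -- integrability of RHS
  have hW1 : Integrable W := by
    have := hpow 1 le_rfl; simpa using this
  have hW2 : Integrable (fun z => (W z) ^ 2) := hpow 2 (by norm_num)
  have hRHS : Integrable (fun z => (W z) ^ 2 / c - W z + W z * Real.log c) := by
    exact ((hW2.div_const c).sub hW1).add (hW1.mul_const _)
  have hint : (∫ z, W z * Real.log (W z)) ≤ ∫ z, ((W z) ^ 2 / c - W z + W z * Real.log c) :=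
    integral_mono hlog hRHS hpt
  have hRHSval : (∫ z, ((W z) ^ 2 / c - W z + W z * Real.log c)) = Real.log c := by
    have hA : Integrable (fun z => (W z) ^ 2 / c - W z) :=
      (hW2.div_const c).sub hW1
    have hB : Integrable (fun z => W z * Real.log c) := hW1.mul_const _
    rw [integral_add hA hB, integral_sub (hW2.div_const c) hW1, integral_div, ← hc,
        integral_mul_const, hnorm, div_self (ne_of_gt hc0)]
    ring
  -- c ≤ 1 / (π * e)
  have hce : c ≤ 1 / (Real.pi * Real.exp 1) := by
    have h2pi : (0:ℝ) < 2 * Real.pi := by positivity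
    have he : (0:ℝ) < Real.exp 1 := Real.exp_pos 1
    rw [le_div_iff₀ (by positivity)]
    rw [le_div_iff₀ (by positivity)] at hmu
    nlinarith [hmu]
  have hlogc : Real.log c ≤ -(1 + Real.log Real.pi) := by
    have := Real.log_le_log hc0 hce
    have hlogval : Real.log (1 / (Real.pi * Real.exp 1)) = -(1 + Real.log Real.pi) := by
      rw [Real.log_div one_ne_zero (by positivity), Real.log_one,
          Real.log_mul (ne_of_gt Real.pi_pos) (ne_of_gt (Real.exp_pos 1)), Real.log_exp]
      ring
    linarith [hlogval ▸ this]
  have : (∫ z, W z * Real.log (W z)) ≤ -(1 + Real.log Real.pi) := by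
    rw [hRHSval] at hint; linarith
  linarith
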